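/- Fix η > 6 and define q_η(x) = Q( (x − η)/√(2x) ) for x > 0. Then there exists a unique x₁ > η satisfying (1/(4√π)) · e^{−(x₁−η)²/(4x₁)} · ( η/√x₁ + √x₁ ) = Q( (η − x₁)/√(2x₁) ). Moreover, the function g_η : [0,∞) → ℝ defined by g_η(x) = Q( (x−η)/√(2x) ) for x > x₁ and g_η(x) = 1 − (x/x₁)·Q( (η − x₁)/√(2x₁) ) for 0 ≤ x ≤ x₁ is convex on [0,∞) and satisfies g_η(x) ≤ q_η(x) for all x > 0; i.e., g_η is a convex lower bound on q_η whose linear piece is the tangent line to q_η through (0,1) with tangency point x₁. -/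

import Mathlib

open MeasureTheory ProbabilityTheory

/-- The Gaussian Q-function `Q(y) = P[Z > y]` for `Z` standard normal. -/
noncomputable def gaussianQ (y : ℝ) : ℝ :=
  (gaussianReal 0 1 (Set.Ioi y)).toReal

/-- The function `q_η(x) = Q((x - η)/√(2x))` for `x > 0`. -/
noncomputable def qEta (η x : ℝ) : ℝ :=
  gaussianQ ((x - η) / Real.sqrt (2 * x))

/-- The tangency equation (14) determining the tangency point `x₁`. -/
def TangencyEq (η x₁ : ℝ) : Prop :=
  (1 / (4 * Real.sqrt Real.pi)) * Real.exp (-(x₁ - η) ^ 2 / (4 * x₁)) *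
      (η / Real.sqrt x₁ + Real.sqrt x₁) =
    gaussianQ ((η - x₁) / Real.sqrt (2 * x₁))

/-- The convex lower bound `g_η` built from the tangency point `x₁`. -/
noncomputable def gEta (η x₁ x : ℝ) : ℝ :=
  if x₁ < x then qEta η x
  else 1 - (x / x₁) * gaussianQ ((η - x₁) / Real.sqrt (2 * x₁))

/-!
Write `u(x) = (x - η)/√(2x)` (`qEtaArg`), so that `q_η = Q ∘ u` and
`q_η'' = φ(u) P(x) / (8 √(2x) x³)` with `P(x) = x³ + (η + 2)x² + (6η - η²)x - η³`
(`inflectionPoly`). Once `P` is nonnegative at some `x > 0` it stays so, and `P > 0` on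
`[η, ∞)`: `q_η` is concave, then convex, switching before `η`.

The tangent line to `q_η` at `x` crosses `x = 0` at height `T(x) = q_η(x) - x q_η'(x)`
(`tangentIntercept`), and `T' = -x q_η''`. Tangency through `(0, 1)` means `T(x₁) = 1`. On `[η, ∞)`,
`T` strictly decreases from `T(η) = 1/2 + √(η/(4π)) > 1` to values below `1`, which gives a unique
`x₁ > η`.

For `0 < x ≤ x₁` one has `T(x) ≥ 1`: on the convex part `T` decreases to `T(x₁) = 1`; on the
concave part it increases and exceeds `q_η`, which tends to `1` at `0⁺`. As
`((1 - q_η(x))/x)' = (T(x) - 1)/x²`, the quotient `(1 - q_η(x))/x` is at most its value at `x₁`,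
minus the slope of the linear piece of `g_η`; this is the lower bound. Finally `g_η` has derivative
`q_η'(max x x₁)`, monotone because `q_η` is convex on `[η, ∞)`.
-/

open Set Filter Topology

noncomputable def gaussianDensity (y : ℝ) : ℝ := (Real.sqrt (2 * Real.pi))⁻¹ * Real.exp (-y ^ 2 / 2)

lemma gaussianPDFReal_zero_one : gaussianPDFReal 0 1 = gaussianDensity := by
  ext y
  simp [gaussianPDFReal, gaussianDensity]

lemma gaussianDensity_pos (y : ℝ) : 0 < gaussianDensity y := by
  unfold gaussianDensity
  have := Real.pi_pos
  positivity

lemma continuous_gaussianDensity : Continuous gaussianDensity := by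
  unfold gaussianDensity
  fun_prop

lemma integrable_gaussianDensity : Integrable gaussianDensity :=
  gaussianPDFReal_zero_one ▸ integrable_gaussianPDFReal 0 1

lemma integral_gaussianDensity : ∫ t, gaussianDensity t = 1 :=
  gaussianPDFReal_zero_one ▸ integral_gaussianPDFReal_eq_one 0 one_ne_zero

lemma hasDerivAt_gaussianDensity (y : ℝ) :
    HasDerivAt gaussianDensity (-(y * gaussianDensity y)) y := by
  have hexponent : HasDerivAt (fun z : ℝ => -z ^ 2 / 2) (-y) y := by
    simpa using ((hasDerivAt_pow 2 y).neg.div_const 2).congr_deriv (by push_cast; ring)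
  refine (hexponent.exp.const_mul (Real.sqrt (2 * Real.pi))⁻¹).congr_deriv ?_
  unfold gaussianDensity
  ring

lemma gaussianDensity_le_exp (y : ℝ) : gaussianDensity y ≤ Real.exp (-y ^ 2 / 2) := by
  have hpi : 1 ≤ Real.sqrt (2 * Real.pi) :=
    Real.one_le_sqrt.2 (by nlinarith [Real.pi_gt_three])
  exact mul_le_of_le_one_left (Real.exp_pos _).le (inv_le_one_of_one_le₀ hpi)

lemma cdf_gaussianReal_zero_one (y : ℝ) :
    cdf (gaussianReal 0 1) y = ∫ t in Iic y, gaussianDensity t := by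
  rw [cdf_eq_real, measureReal_def, gaussianReal_apply_eq_integral 0 one_ne_zero,
    gaussianPDFReal_zero_one, ENNReal.toReal_ofReal]
  exact integral_nonneg fun t => (gaussianDensity_pos t).le

lemma gaussianQ_eq_one_sub_cdf (y : ℝ) : gaussianQ y = 1 - cdf (gaussianReal 0 1) y := by
  rw [gaussianQ, ← compl_Iic, prob_compl_eq_one_sub measurableSet_Iic, cdf_eq_real,
    measureReal_def, ENNReal.toReal_sub_of_le prob_le_one ENNReal.one_ne_top, ENNReal.toReal_one]

lemma hasDerivAt_gaussianQ (y : ℝ) : HasDerivAt gaussianQ (-gaussianDensity y) y := by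
  have hcdf : (fun z => cdf (gaussianReal 0 1) z) =
      fun z => (∫ t in Iic 0, gaussianDensity t) + ∫ t in (0 : ℝ)..z, gaussianDensity t := by
    ext z
    rw [cdf_gaussianReal_zero_one, ← intervalIntegral.integral_Iic_sub_Iic
      integrable_gaussianDensity.integrableOn integrable_gaussianDensity.integrableOn]
    ring
  have h : HasDerivAt (fun z => cdf (gaussianReal 0 1) z) (gaussianDensity y) y := by
    rw [hcdf]
    exact (intervalIntegral.integral_hasDerivAt_right integrable_gaussianDensity.intervalIntegrable
      (continuous_gaussianDensity.stronglyMeasurableAtFilter _ _)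
      continuous_gaussianDensity.continuousAt).const_add _
  rw [show gaussianQ = fun z => 1 - cdf (gaussianReal 0 1) z from funext gaussianQ_eq_one_sub_cdf]
  exact h.const_sub 1

lemma gaussianQ_antitone : Antitone gaussianQ := fun a b hab => by
  simp only [gaussianQ_eq_one_sub_cdf]
  linarith [monotone_cdf (gaussianReal 0 1) hab]

lemma gaussianQ_neg (y : ℝ) : gaussianQ (-y) = 1 - gaussianQ y := by
  have hsymm : ∫ t in Iic (-y), gaussianDensity t = ∫ t in Ioi y, gaussianDensity t := by
    rw [← integral_comp_neg_Ioi]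
    simp [gaussianDensity]
  have htotal := intervalIntegral.integral_Iic_add_Ioi (b := y)
    integrable_gaussianDensity.integrableOn integrable_gaussianDensity.integrableOn
  rw [integral_gaussianDensity] at htotal
  simp only [gaussianQ_eq_one_sub_cdf, cdf_gaussianReal_zero_one, hsymm]
  linarith

lemma gaussianQ_zero : gaussianQ 0 = 1 / 2 := by
  linarith [neg_zero (G := ℝ) ▸ gaussianQ_neg 0]

lemma tendsto_gaussianQ_atBot : Tendsto gaussianQ atBot (𝓝 1) := by
  simpa [funext gaussianQ_eq_one_sub_cdf] using
    (tendsto_cdf_atBot (gaussianReal 0 1)).const_sub (1 : ℝ)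

section DerivativeTests

variable {D : Set ℝ} {f f' : ℝ → ℝ}

lemma monotoneOn_of_hasDerivAt_of_nonneg (hD : Convex ℝ D) (hf : ∀ x ∈ D, HasDerivAt f (f' x) x)
    (hf' : ∀ x ∈ D, 0 ≤ f' x) : MonotoneOn f D :=
  monotoneOn_of_hasDerivWithinAt_nonneg hD (fun x hx => (hf x hx).continuousAt.continuousWithinAt)
    (fun x hx => (hf x (interior_subset hx)).hasDerivWithinAt)
    fun x hx => hf' x (interior_subset hx)

lemma antitoneOn_of_hasDerivAt_of_nonpos (hD : Convex ℝ D) (hf : ∀ x ∈ D, HasDerivAt f (f' x) x)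
    (hf' : ∀ x ∈ D, f' x ≤ 0) : AntitoneOn f D :=
  antitoneOn_of_hasDerivWithinAt_nonpos hD (fun x hx => (hf x hx).continuousAt.continuousWithinAt)
    (fun x hx => (hf x (interior_subset hx)).hasDerivWithinAt)
    fun x hx => hf' x (interior_subset hx)

lemma strictAntiOn_of_hasDerivAt_of_neg (hD : Convex ℝ D) (hf : ∀ x ∈ D, HasDerivAt f (f' x) x)
    (hf' : ∀ x ∈ interior D, f' x < 0) : StrictAntiOn f D :=
  strictAntiOn_of_hasDerivWithinAt_neg hD (fun x hx => (hf x hx).continuousAt.continuousWithinAt)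
    (fun x hx => (hf x (interior_subset hx)).hasDerivWithinAt) hf'

lemma HasDerivAt.of_eqOn_Iic_of_eqOn_Ici {g h : ℝ → ℝ} {a c : ℝ} (hg : HasDerivAt g c a)
    (hh : HasDerivAt h c a) (hfg : EqOn f g (Iic a)) (hfh : EqOn f h (Ici a)) :
    HasDerivAt f c a := by
  have := (hg.hasDerivWithinAt.congr hfg (hfg self_mem_Iic)).union
    (hh.hasDerivWithinAt.congr hfh (hfh self_mem_Ici))
  rwa [Iic_union_Ici, hasDerivWithinAt_univ] at this

end DerivativeTests


noncomputable def qEtaArg (η x : ℝ) : ℝ := (x - η) / Real.sqrt (2 * x)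

noncomputable def qEtaDeriv (η x : ℝ) : ℝ :=
  -(gaussianDensity (qEtaArg η x) * ((x + η) / (2 * Real.sqrt (2 * x) * x)))

def inflectionPoly (η x : ℝ) : ℝ := x ^ 3 + (η + 2) * x ^ 2 + (6 * η - η ^ 2) * x - η ^ 3

noncomputable def qEtaDeriv2 (η x : ℝ) : ℝ :=
  gaussianDensity (qEtaArg η x) * inflectionPoly η x / (8 * Real.sqrt (2 * x) * x ^ 3)

section Calculus

variable {η x : ℝ}

lemma qEta_eq_gaussianQ_qEtaArg (η x : ℝ) : qEta η x = gaussianQ (qEtaArg η x) := rfl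

lemma qEtaArg_sq_div_two (η : ℝ) (hx : 0 < x) :
    qEtaArg η x ^ 2 / 2 = (x - η) ^ 2 / (4 * x) := by
  rw [qEtaArg, div_pow, Real.sq_sqrt (by positivity)]
  field_simp
  ring

lemma hasDerivAt_sqrt_two_mul (hx : 0 < x) :
    HasDerivAt (fun t => Real.sqrt (2 * t)) (Real.sqrt (2 * x))⁻¹ x := by
  have hsqrt := (Real.hasDerivAt_sqrt (by positivity)).comp x ((hasDerivAt_id x).const_mul 2)
  refine hsqrt.congr_deriv ?_
  simp only [id_eq]
  field_simp

lemma hasDerivAt_qEtaArg (η : ℝ) (hx : 0 < x) :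
    HasDerivAt (qEtaArg η) ((x + η) / (2 * Real.sqrt (2 * x) * x)) x := by
  have hs : 0 < Real.sqrt (2 * x) := Real.sqrt_pos.2 (by positivity)
  have hs2 : Real.sqrt (2 * x) ^ 2 = 2 * x := Real.sq_sqrt (by positivity)
  refine (((hasDerivAt_id x).sub_const η).div (hasDerivAt_sqrt_two_mul hx) hs.ne').congr_deriv ?_
  simp only [id_eq]
  set s := Real.sqrt (2 * x)
  rw [show x = s ^ 2 / 2 by linarith]
  field_simp
  ring

lemma hasDerivAt_qEtaArg_deriv (η : ℝ) (hx : 0 < x) :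
    HasDerivAt (fun t => (t + η) / (2 * Real.sqrt (2 * t) * t))
      (-(Real.sqrt (2 * x) * (x + 3 * η)) / (8 * x ^ 3)) x := by
  have hs2 : Real.sqrt (2 * x) ^ 2 = 2 * x := Real.sq_sqrt (by positivity)
  have hden := ((hasDerivAt_sqrt_two_mul hx).const_mul 2).mul (hasDerivAt_id x)
  have hden_ne : (fun t => 2 * Real.sqrt (2 * t) * t) x ≠ 0 := by positivity
  refine (((hasDerivAt_id x).add_const η).div hden hden_ne).congr_deriv ?_
  simp only [Pi.mul_apply, id_eq]
  set s := Real.sqrt (2 * x)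
  rw [show x = s ^ 2 / 2 by linarith]
  field_simp
  ring

lemma hasDerivAt_qEta (η : ℝ) (hx : 0 < x) : HasDerivAt (qEta η) (qEtaDeriv η x) x :=
  ((hasDerivAt_gaussianQ _).comp x (hasDerivAt_qEtaArg η hx)).congr_deriv (by rw [qEtaDeriv]; ring)

lemma hasDerivAt_qEtaDeriv (η : ℝ) (hx : 0 < x) :
    HasDerivAt (qEtaDeriv η) (qEtaDeriv2 η x) x := by
  have hs2 : Real.sqrt (2 * x) ^ 2 = 2 * x := Real.sq_sqrt (by positivity)
  have hdensity := (hasDerivAt_gaussianDensity _).comp x (hasDerivAt_qEtaArg η hx)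
  refine (hdensity.mul (hasDerivAt_qEtaArg_deriv η hx)).neg.congr_deriv ?_
  rw [Function.comp_apply, qEtaDeriv2, qEtaArg, inflectionPoly]
  set s := Real.sqrt (2 * x)
  rw [show x = s ^ 2 / 2 by linarith]
  field_simp
  ring

lemma qEtaDeriv_neg (hη : 0 < η) (hx : 0 < x) : qEtaDeriv η x < 0 := by
  have := gaussianDensity_pos (qEtaArg η x)
  rw [qEtaDeriv, neg_lt_zero]
  positivity

end Calculus

section InflectionPoly

variable {η x y : ℝ}

lemma inflectionPoly_nonneg_of_le (hη : 0 < η) (hx : 0 < x) (hxy : x ≤ y)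
    (hPx : 0 ≤ inflectionPoly η x) : 0 ≤ inflectionPoly η y := by
  unfold inflectionPoly at *
  have hquad : 0 < x ^ 2 + (η + 2) * x + (6 * η - η ^ 2) := by
    by_contra! h
    nlinarith [mul_nonpos_of_nonneg_of_nonpos hx.le h, pow_pos hη 3]
  have hy : 0 < y := hx.trans_le hxy
  have hfactor : 0 ≤ y ^ 2 + x * y + x ^ 2 + (η + 2) * (y + x) + (6 * η - η ^ 2) := by
    nlinarith [mul_pos hx hy]
  nlinarith [mul_nonneg (sub_nonneg.2 hxy) hfactor]

lemma inflectionPoly_pos_of_le (hη : 0 < η) (hx : η ≤ x) : 0 < inflectionPoly η x := by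
  unfold inflectionPoly
  nlinarith [mul_nonneg (mul_nonneg (hη.le.trans hx) (sub_nonneg.2 hx)) (by linarith : 0 ≤ x + η),
    mul_le_mul hx hx hη.le (hη.le.trans hx), sq_nonneg x]

lemma qEtaDeriv2_nonneg (hx : 0 < x) (hP : 0 ≤ inflectionPoly η x) : 0 ≤ qEtaDeriv2 η x := by
  have := gaussianDensity_pos (qEtaArg η x)
  unfold qEtaDeriv2
  positivity

lemma qEtaDeriv2_pos (hx : 0 < x) (hP : 0 < inflectionPoly η x) : 0 < qEtaDeriv2 η x := by
  have := gaussianDensity_pos (qEtaArg η x)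
  unfold qEtaDeriv2
  positivity

lemma qEtaDeriv2_nonpos (hx : 0 < x) (hP : inflectionPoly η x ≤ 0) : qEtaDeriv2 η x ≤ 0 := by
  have := gaussianDensity_pos (qEtaArg η x)
  exact div_nonpos_of_nonpos_of_nonneg (mul_nonpos_of_nonneg_of_nonpos this.le hP) (by positivity)

end InflectionPoly

noncomputable def tangentIntercept (η x : ℝ) : ℝ := qEta η x - x * qEtaDeriv η x

section TangentIntercept

variable {η x : ℝ}

lemma hasDerivAt_tangentIntercept (η : ℝ) (hx : 0 < x) :
    HasDerivAt (tangentIntercept η) (-(x * qEtaDeriv2 η x)) x :=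
  ((hasDerivAt_qEta η hx).sub ((hasDerivAt_id x).mul (hasDerivAt_qEtaDeriv η hx))).congr_deriv
    (by simp only [id_eq]; ring)

lemma gaussianQ_reflect_qEtaArg (η x : ℝ) :
    gaussianQ ((η - x) / Real.sqrt (2 * x)) = 1 - qEta η x := by
  rw [qEta, ← gaussianQ_neg]
  ring_nf

lemma tangencyEq_iff (hx : 0 < x) : TangencyEq η x ↔ tangentIntercept η x = 1 := by
  have hslope : (1 / (4 * Real.sqrt Real.pi)) * Real.exp (-(x - η) ^ 2 / (4 * x)) *
      (η / Real.sqrt x + Real.sqrt x) = -(x * qEtaDeriv η x) := by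
    rw [qEtaDeriv, gaussianDensity, neg_div, ← qEtaArg_sq_div_two η hx, ← neg_div,
      Real.sqrt_mul zero_le_two, Real.sqrt_mul zero_le_two]
    field_simp
    rw [Real.sq_sqrt zero_le_two, Real.sq_sqrt hx.le]
    ring
  rw [TangencyEq, hslope, gaussianQ_reflect_qEtaArg, tangentIntercept]
  constructor <;> intro h <;> linarith

lemma qEtaDeriv_eq_of_tangentIntercept_eq_one (hx : 0 < x) (h : tangentIntercept η x = 1) :
    qEtaDeriv η x = -((1 - qEta η x) / x) := by
  rw [tangentIntercept] at h
  field_simp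
  linarith

end TangentIntercept

section Existence

variable {η : ℝ}

lemma strictAntiOn_tangentIntercept (hη : 0 < η) : StrictAntiOn (tangentIntercept η) (Ici η) :=
  strictAntiOn_of_hasDerivAt_of_neg (convex_Ici η)
    (fun x hx => hasDerivAt_tangentIntercept η (hη.trans_le hx)) fun x hx => by
      rw [interior_Ici] at hx
      have hx0 : 0 < x := hη.trans hx
      nlinarith [qEtaDeriv2_pos hx0 (inflectionPoly_pos_of_le hη hx.le)]

lemma one_lt_tangentIntercept_self (hη : Real.pi < η) : 1 < tangentIntercept η η := by
  have hη0 : 0 < η := Real.pi_pos.trans hη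
  have hpi : 0 < Real.sqrt Real.pi := Real.sqrt_pos.2 Real.pi_pos
  have hintercept : tangentIntercept η η = 1 / 2 + Real.sqrt η / Real.sqrt Real.pi / 2 := by
    have hsη : Real.sqrt η ^ 2 = η := Real.sq_sqrt hη0.le
    have hzero : qEtaArg η η = 0 := by simp [qEtaArg]
    rw [tangentIntercept, qEtaDeriv, qEta_eq_gaussianQ_qEtaArg, hzero, gaussianQ_zero,
      gaussianDensity, Real.sqrt_mul zero_le_two, Real.sqrt_mul zero_le_two, ← hsη]
    field_simp
    rw [Real.sqrt_sq (Real.sqrt_nonneg η), Real.sq_sqrt zero_le_two]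
    norm_num
    ring
  have hratio : 1 < Real.sqrt η / Real.sqrt Real.pi :=
    (one_lt_div hpi).2 (Real.sqrt_lt_sqrt Real.pi_pos.le hη)
  linarith

lemma neg_mul_qEtaDeriv_le {x : ℝ} (hη : 0 ≤ η) (hηx : η ≤ x) (hx : 1 / 2 ≤ x) :
    -(x * qEtaDeriv η x) ≤ x * Real.exp (-(x - η) ^ 2 / (4 * x)) := by
  have hx0 : 0 < x := by linarith
  have hs : 1 ≤ Real.sqrt (2 * x) := Real.one_le_sqrt.2 (by linarith)
  have hrw : -(x * qEtaDeriv η x) =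
      gaussianDensity (qEtaArg η x) * ((x + η) / (2 * Real.sqrt (2 * x))) := by
    rw [qEtaDeriv]
    field_simp
  have hdensity : gaussianDensity (qEtaArg η x) ≤ Real.exp (-(x - η) ^ 2 / (4 * x)) := by
    rw [neg_div, ← qEtaArg_sq_div_two η hx0, ← neg_div]
    exact gaussianDensity_le_exp _
  have hfactor : (x + η) / (2 * Real.sqrt (2 * x)) ≤ x := by
    rw [div_le_iff₀ (by positivity)]
    nlinarith
  rw [hrw, mul_comm x]
  exact mul_le_mul hdensity hfactor (by positivity) (Real.exp_pos _).le

lemma tangentIntercept_lt_one (hη : 0 < η) : tangentIntercept η (4 * η + 200) < 1 := by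
  set X := 4 * η + 200 with hX
  set a := η / 2 + 50 with ha
  have hX0 : 0 < X := by linarith
  have hq : qEta η X ≤ 1 / 2 := by
    rw [qEta_eq_gaussianQ_qEtaArg, ← gaussianQ_zero]
    exact gaussianQ_antitone (div_nonneg (by linarith) (Real.sqrt_nonneg _))
  have hexponent : a ≤ (X - η) ^ 2 / (4 * X) := by
    rw [le_div_iff₀ (by positivity)]
    nlinarith
  have hexp : 2 * X < Real.exp a :=
    calc 2 * X ≤ 16 * a := by linarith
      _ < a ^ 2 / (Nat.factorial 2) := by norm_num; nlinarith
      _ ≤ Real.exp a := Real.pow_div_factorial_le_exp (x := a) (by positivity) 2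
  have hslope : X * Real.exp (-(X - η) ^ 2 / (4 * X)) < 1 / 2 :=
    calc X * Real.exp (-(X - η) ^ 2 / (4 * X)) ≤ X * Real.exp (-a) := by
          gcongr
          rw [neg_div]
          exact neg_le_neg hexponent
      _ = X / Real.exp a := by rw [Real.exp_neg, div_eq_mul_inv]
      _ < 1 / 2 := by rw [div_lt_iff₀ (Real.exp_pos a)]; linarith
  have := neg_mul_qEtaDeriv_le (x := X) hη.le (by linarith) (by linarith)
  rw [tangentIntercept]
  linarith

lemma existsUnique_tangencyEq (hη : Real.pi < η) : ∃! x₁ : ℝ, η < x₁ ∧ TangencyEq η x₁ := by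
  have hη0 : 0 < η := Real.pi_pos.trans hη
  have hcont : ContinuousOn (tangentIntercept η) (Icc η (4 * η + 200)) := fun x hx =>
    (hasDerivAt_tangentIntercept η (hη0.trans_le hx.1)).continuousAt.continuousWithinAt
  obtain ⟨x₁, hx₁, hval⟩ := intermediate_value_Icc' (by linarith) hcont
    ⟨(tangentIntercept_lt_one hη0).le, (one_lt_tangentIntercept_self hη).le⟩
  have hηx₁ : η < x₁ :=
    hx₁.1.lt_of_ne (by rintro rfl; linarith [one_lt_tangentIntercept_self hη])
  refine ⟨x₁, ⟨hηx₁, (tangencyEq_iff (hη0.trans hηx₁)).2 hval⟩, fun y ⟨hy, hTy⟩ => ?_⟩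
  exact (strictAntiOn_tangentIntercept hη0).injOn hy.le hηx₁.le
    (((tangencyEq_iff (hη0.trans hy)).1 hTy).trans hval.symm)

end Existence

lemma tendsto_qEtaArg_nhdsGT_zero {η : ℝ} (hη : 0 < η) :
    Tendsto (qEtaArg η) (𝓝[>] 0) atBot := by
  have hsqrt : Tendsto (fun x : ℝ => Real.sqrt (2 * x)) (𝓝[>] 0) (𝓝[>] 0) := by
    refine tendsto_nhdsWithin_iff.2 ⟨?_, ?_⟩
    · simpa using ((by fun_prop : Continuous fun x : ℝ => Real.sqrt (2 * x)).tendsto 0).mono_left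
        nhdsWithin_le_nhds
    · filter_upwards [self_mem_nhdsWithin] with x (hx : 0 < x)
      exact Real.sqrt_pos.2 (by positivity)
  have hnum : Tendsto (fun x : ℝ => x - η) (𝓝[>] 0) (𝓝 (-η)) := by
    simpa using ((continuous_sub_right η).tendsto 0).mono_left nhdsWithin_le_nhds
  exact (hnum.neg_mul_atTop (neg_lt_zero.2 hη) (tendsto_inv_nhdsGT_zero.comp hsqrt)).congr
    fun x => (div_eq_mul_inv _ _).symm

lemma tendsto_qEta_nhdsGT_zero {η : ℝ} (hη : 0 < η) : Tendsto (qEta η) (𝓝[>] 0) (𝓝 1) :=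
  tendsto_gaussianQ_atBot.comp (tendsto_qEtaArg_nhdsGT_zero hη)

section LowerBound

variable {η x₁ : ℝ}

lemma one_le_tangentIntercept (hη : 0 < η) (htan : tangentIntercept η x₁ = 1) {x : ℝ} (hx : 0 < x)
    (hxx₁ : x ≤ x₁) : 1 ≤ tangentIntercept η x := by
  rcases le_or_gt 0 (inflectionPoly η x) with hP | hP
  · have hanti : AntitoneOn (tangentIntercept η) (Ici x) :=
      antitoneOn_of_hasDerivAt_of_nonpos (convex_Ici x)
        (fun t ht => hasDerivAt_tangentIntercept η (hx.trans_le ht)) fun t ht => by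
          have ht0 := hx.trans_le ht
          nlinarith [qEtaDeriv2_nonneg ht0 (inflectionPoly_nonneg_of_le hη hx ht hP)]
    exact htan ▸ hanti self_mem_Ici hxx₁ hxx₁
  · have hmono : MonotoneOn (tangentIntercept η) (Ioc 0 x) :=
      monotoneOn_of_hasDerivAt_of_nonneg (convex_Ioc 0 x)
        (fun t ht => hasDerivAt_tangentIntercept η ht.1) fun t ht => by
          have hPt : inflectionPoly η t ≤ 0 := by
            by_contra! h
            exact hP.not_ge (inflectionPoly_nonneg_of_le hη ht.1 ht.2 h.le)
          nlinarith [qEtaDeriv2_nonpos ht.1 hPt, ht.1]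
    refine le_of_tendsto (tendsto_qEta_nhdsGT_zero hη) ?_
    filter_upwards [Ioc_mem_nhdsGT hx] with t ht
    calc qEta η t ≤ tangentIntercept η t := by
          rw [tangentIntercept]
          nlinarith [qEtaDeriv_neg hη ht.1, ht.1]
      _ ≤ tangentIntercept η x := hmono ht ⟨hx, le_rfl⟩ ht.2

lemma monotoneOn_one_sub_qEta_div (hη : 0 < η) (htan : tangentIntercept η x₁ = 1) :
    MonotoneOn (fun x => (1 - qEta η x) / x) (Ioc 0 x₁) :=
  monotoneOn_of_hasDerivAt_of_nonneg (convex_Ioc 0 x₁)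
    (fun x hx => ((hasDerivAt_qEta η hx.1).const_sub 1).div (hasDerivAt_id x) hx.1.ne')
    fun x hx => by
      have := one_le_tangentIntercept hη htan hx.1 hx.2
      rw [tangentIntercept] at this
      exact div_nonneg (by linarith) (sq_nonneg _)

lemma one_sub_mul_le_qEta (hη : 0 < η) (htan : tangentIntercept η x₁ = 1) {x : ℝ} (hx : 0 < x)
    (hxx₁ : x ≤ x₁) : 1 - x * ((1 - qEta η x₁) / x₁) ≤ qEta η x := by
  have := monotoneOn_one_sub_qEta_div hη htan ⟨hx, hxx₁⟩ ⟨hx.trans_le hxx₁, le_rfl⟩ hxx₁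
  rw [div_le_iff₀ hx] at this
  linarith

end LowerBound

section Convexity

variable {η x₁ : ℝ}

lemma gEta_of_le {x : ℝ} (hx : x ≤ x₁) : gEta η x₁ x = 1 - x * ((1 - qEta η x₁) / x₁) := by
  rw [gEta, if_neg hx.not_gt, gaussianQ_reflect_qEtaArg]
  ring

lemma gEta_of_lt {x : ℝ} (hx : x₁ < x) : gEta η x₁ x = qEta η x := if_pos hx

lemma monotoneOn_qEtaDeriv (hη : 0 < η) : MonotoneOn (qEtaDeriv η) (Ici η) :=
  monotoneOn_of_hasDerivAt_of_nonneg (convex_Ici η)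
    (fun _ hx => hasDerivAt_qEtaDeriv η (hη.trans_le hx)) fun _ hx =>
      qEtaDeriv2_nonneg (hη.trans_le hx) (inflectionPoly_pos_of_le hη hx).le

lemma hasDerivAt_gEta (hx₁ : 0 < x₁) (htan : tangentIntercept η x₁ = 1) (x : ℝ) :
    HasDerivAt (gEta η x₁) (qEtaDeriv η (max x x₁)) x := by
  set line : ℝ → ℝ := fun t => 1 - t * ((1 - qEta η x₁) / x₁)
  have hline (t : ℝ) : HasDerivAt line (qEtaDeriv η x₁) t := by
    rw [qEtaDeriv_eq_of_tangentIntercept_eq_one hx₁ htan]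
    simpa using ((hasDerivAt_id t).mul_const ((1 - qEta η x₁) / x₁)).const_sub 1
  have hleft : EqOn (gEta η x₁) line (Iic x₁) := fun t ht => gEta_of_le ht
  have hright : EqOn (gEta η x₁) (qEta η) (Ici x₁) := by
    intro t ht
    rcases (mem_Ici.1 ht).eq_or_lt with rfl | h
    · rw [gEta_of_le le_rfl]
      field_simp
      ring
    · exact gEta_of_lt h
  rcases lt_trichotomy x x₁ with h | rfl | h
  · rw [max_eq_right h.le]
    exact (hline x).congr_of_eventuallyEq (eventually_of_mem (Iic_mem_nhds h) hleft)
  · rw [max_self]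
    exact (hline x).of_eqOn_Iic_of_eqOn_Ici (hasDerivAt_qEta η hx₁) hleft hright
  · rw [max_eq_left h.le]
    exact (hasDerivAt_qEta η (hx₁.trans h)).congr_of_eventuallyEq
      (eventually_of_mem (Ici_mem_nhds h) hright)

lemma convexOn_gEta (hη : 0 < η) (hηx₁ : η < x₁) (htan : tangentIntercept η x₁ = 1) :
    ConvexOn ℝ univ (gEta η x₁) := by
  have hderiv := hasDerivAt_gEta (hη.trans hηx₁) htan
  refine Monotone.convexOn_univ_of_deriv (fun x => (hderiv x).differentiableAt) ?_
  rw [funext fun x => (hderiv x).deriv]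
  exact fun a b hab => monotoneOn_qEtaDeriv hη (le_max_of_le_right hηx₁.le)
    (le_max_of_le_right hηx₁.le) (max_le_max hab le_rfl)

end Convexity

theorem convex_lower_bound_on_qEta (η : ℝ) (hη : 6 < η) :
    (∃! x₁ : ℝ, η < x₁ ∧ TangencyEq η x₁) ∧
    ∀ x₁ : ℝ, η < x₁ → TangencyEq η x₁ →
      ConvexOn ℝ (Set.Ici (0 : ℝ)) (gEta η x₁) ∧
      ∀ x : ℝ, 0 < x → gEta η x₁ x ≤ qEta η x := by
  have hπη : Real.pi < η := by linarith [Real.pi_lt_four]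
  have hη0 : 0 < η := by linarith
  refine ⟨existsUnique_tangencyEq hπη, fun x₁ hηx₁ hT => ?_⟩
  have htan := (tangencyEq_iff (hη0.trans hηx₁)).1 hT
  refine ⟨(convexOn_gEta hη0 hηx₁ htan).subset (subset_univ _) (convex_Ici 0), fun x hx => ?_⟩
  rcases lt_or_ge x₁ x with h | h
  · exact (gEta_of_lt h).le
  · exact (gEta_of_le h).trans_le (one_sub_mul_le_qEta hη0 htan hx h)
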